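/- arXiv:math/0308219 — 3 statements merged into one kernel-verified Lean document; each statement's English description precedes it below -/
import Mathlib

section
/- Let f : X → Y be a perfect (i.e., closed continuous with compact fibers) map between metric spaces such that every fiber f⁻¹(y), y ∈ Y, has covering dimension at most 0. Then f is uniformly 0-dimensional with respect to the given metric on X: for every ε > 0, every point of f(X) has a neighborhood U in Y such that f⁻¹(U) is a union of pairwise disjoint open subsets of X each of diameter less than ε. -/
universe u v

/-- Covering dimension at most `n`: every open cover admits an open refinement
covering the space in which every point lies in at most `n + 1` members. -/
def CovDimLE (Z : Type u) [TopologicalSpace Z] (n : ℕ) : Prop :=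
  ∀ 𝒰 : Set (Set Z), (∀ U ∈ 𝒰, IsOpen U) → ⋃₀ 𝒰 = Set.univ →
    ∃ 𝒱 : Set (Set Z), (∀ V ∈ 𝒱, IsOpen V) ∧ (∀ V ∈ 𝒱, ∃ U ∈ 𝒰, V ⊆ U) ∧
      ⋃₀ 𝒱 = Set.univ ∧ ∀ z : Z, {V ∈ 𝒱 | z ∈ V}.encard ≤ (n + 1 : ℕ)

/-- A perfect map of metric spaces with 0-dimensional fibers is uniformly
0-dimensional with respect to the given metric on the domain. -/
theorem perfect_zeroDim_uniformlyZeroDimensional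
    {X : Type u} {Y : Type v} [MetricSpace X] [MetricSpace Y]
    (f : X → Y) (hf : Continuous f) (hfc : IsClosedMap f)
    (hcpt : ∀ y : Y, IsCompact (f ⁻¹' {y}))
    (hdim : ∀ y : Y, CovDimLE ↥(f ⁻¹' {y}) 0) :
    ∀ ε : ℝ, 0 < ε → ∀ x : X, ∃ U ∈ nhds (f x),
      ∃ 𝒱 : Set (Set X), (∀ V ∈ 𝒱, IsOpen V) ∧ 𝒱.PairwiseDisjoint id ∧
        (∀ V ∈ 𝒱, Metric.diam V < ε) ∧ f ⁻¹' U = ⋃₀ 𝒱 := by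
  intro ε hε x
  set y := f x with hy
  set K := f ⁻¹' {y} with hK
  have hKcpt : IsCompact K := hcpt y
  haveI : CompactSpace ↥K := isCompact_iff_compactSpace.mp hKcpt
  obtain ⟨𝒱, hVopen, hVref, hVcov, hVcard⟩ :=
    hdim y ((fun z : X => (Subtype.val ⁻¹' Metric.ball z (ε/4) : Set ↥K)) '' Set.univ)
      (by rintro U ⟨z, -, rfl⟩; exact Metric.isOpen_ball.preimage continuous_subtype_val)
      (by
        ext k
        simp only [Set.mem_sUnion, Set.mem_univ, iff_true]
        exact ⟨_, ⟨(k : X), Set.mem_univ _, rfl⟩,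
          Metric.mem_ball_self (by positivity : (0:ℝ) < ε/4)⟩)
  have hVdisj : ∀ V ∈ 𝒱, ∀ V' ∈ 𝒱, V ≠ V' → Disjoint V V' := by
    intro V hV V' hV' hne
    rw [Set.disjoint_left]
    intro z hz hz'
    have h2 : ({V, V'} : Set (Set ↥K)).encard ≤ 1 := by
      refine le_trans (Set.encard_le_encard ?_) (by simpa using hVcard z)
      rintro W (rfl | rfl)
      · exact ⟨hV, hz⟩
      · exact ⟨hV', hz'⟩
    rw [Set.encard_pair hne] at h2
    norm_num at h2
  have hVclosed : ∀ V ∈ 𝒱, IsClosed V := by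
    intro V hV
    have hVeq : V = (⋃₀ (𝒱 \ {V}))ᶜ := by
      ext z
      constructor
      · intro hz hzU
        obtain ⟨W, hW, hzW⟩ := hzU
        have hne : V ≠ W := fun h => hW.2 (by simp [h.symm])
        exact Set.disjoint_left.mp (hVdisj V hV W hW.1 hne) hz hzW
      · intro h
        have hzc : z ∈ ⋃₀ 𝒱 := by rw [hVcov]; trivial
        obtain ⟨W, hW, hzW⟩ := hzc
        by_cases hWV : W = V
        · rwa [hWV] at hzW
        · exact absurd (⟨W, ⟨hW, by simp [hWV]⟩, hzW⟩ : z ∈ ⋃₀ (𝒱 \ {V})) h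
    rw [hVeq]
    exact (isOpen_sUnion (fun W hW => hVopen W hW.1)).isClosed_compl
  have hcov' : (Set.univ : Set ↥K) ⊆ ⋃ V ∈ 𝒱, (id V) := by
    intro z _
    have hzc : z ∈ ⋃₀ 𝒱 := by rw [hVcov]; trivial
    obtain ⟨W, hW, hzW⟩ := hzc
    exact Set.mem_iUnion₂.mpr ⟨W, hW, hzW⟩
  obtain ⟨𝒱', h𝒱'sub, h𝒱'fin, h𝒱'cov⟩ :=
    isCompact_univ.elim_finite_subcover_image (fun V hV => hVopen V hV) hcov'
  set 𝒩 : Set (Set ↥K) := {V ∈ 𝒱' | V.Nonempty} with h𝒩def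
  have h𝒩fin : 𝒩.Finite := h𝒱'fin.subset (Set.sep_subset _ _)
  have h𝒩sub : 𝒩 ⊆ 𝒱 := fun V hV => h𝒱'sub hV.1
  have hzex : ∀ V ∈ 𝒩, ∃ zc : X, Subtype.val '' V ⊆ Metric.ball zc (ε/4) := by
    intro V hV
    obtain ⟨U, hU, hVU⟩ := hVref V (h𝒩sub hV)
    obtain ⟨zc, -, rfl⟩ := hU
    exact ⟨zc, by rintro _ ⟨k, hk, rfl⟩; exact hVU hk⟩
  haveI : Nonempty X := ⟨x⟩
  choose! zc hzc using hzex
  set C : Set ↥K → Set X := fun V => Subtype.val '' V with hCdef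
  set O : Set ↥K → Set X := fun V =>
    Metric.ball (zc V) (ε/4) ∩
      ⋂ V' ∈ 𝒩 \ {V}, {a : X | Metric.infDist a (C V) < Metric.infDist a (C V')} with hOdef
  have hOopen : ∀ V, IsOpen (O V) := by
    intro V
    refine Metric.isOpen_ball.inter ?_
    exact Set.Finite.isOpen_biInter (h𝒩fin.subset Set.diff_subset) fun V' _ =>
      isOpen_lt (Metric.continuous_infDist_pt _) (Metric.continuous_infDist_pt _)
  have hCclosed : ∀ V ∈ 𝒩, IsClosed (C V) := fun V hV =>
    (((hVclosed V (h𝒩sub hV)).isCompact).image continuous_subtype_val).isClosed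
  have hCdisj : ∀ V ∈ 𝒩, ∀ V' ∈ 𝒩, V ≠ V' → Disjoint (C V) (C V') := fun V hV V' hV' hne =>
    Set.disjoint_image_of_injective Subtype.val_injective
      (hVdisj V (h𝒩sub hV) V' (h𝒩sub hV') hne)
  have hCO : ∀ V ∈ 𝒩, C V ⊆ O V := by
    intro V hV a ha
    refine ⟨hzc V hV ha, ?_⟩
    refine Set.mem_iInter₂.mpr fun V' hV' => ?_
    have hne : V' ≠ V := by simpa using hV'.2
    have h1 : Metric.infDist a (C V) = 0 := Metric.infDist_zero_of_mem ha
    have hanot : a ∉ C V' := fun hmem =>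
      Set.disjoint_left.mp (hCdisj V' hV'.1 V hV hne) hmem ha
    have h2 : 0 < Metric.infDist a (C V') :=
      ((hCclosed V' hV'.1).notMem_iff_infDist_pos (hV'.1.2.image _)).mp hanot
    simpa only [Set.mem_setOf_eq, h1] using h2
  have hOdisj : ∀ V ∈ 𝒩, ∀ V' ∈ 𝒩, V ≠ V' → Disjoint (O V) (O V') := by
    intro V hV V' hV' hne
    rw [Set.disjoint_left]
    rintro a ⟨-, ha⟩ ⟨-, ha'⟩
    have h1 := Set.mem_iInter₂.mp ha V' ⟨hV', by simpa using hne.symm⟩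
    have h2 := Set.mem_iInter₂.mp ha' V ⟨hV, by simpa using hne⟩
    simp only [Set.mem_setOf_eq] at h1 h2
    exact absurd (h1.trans h2) (lt_irrefl _)
  have hKO : K ⊆ ⋃ V ∈ 𝒩, O V := by
    intro a ha
    have hmem : (⟨a, ha⟩ : ↥K) ∈ ⋃ V ∈ 𝒱', id V := h𝒱'cov (Set.mem_univ _)
    obtain ⟨V, hV, haV⟩ := Set.mem_iUnion₂.mp hmem
    have hV𝒩 : V ∈ 𝒩 := ⟨hV, ⟨_, haV⟩⟩
    exact Set.mem_iUnion₂.mpr ⟨V, hV𝒩, hCO V hV𝒩 ⟨⟨a, ha⟩, haV, rfl⟩⟩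
  set U : Set Y := (f '' (⋃ V ∈ 𝒩, O V)ᶜ)ᶜ with hUdef
  have hUopen : IsOpen U :=
    (hfc _ (isOpen_iUnion (fun V => isOpen_iUnion fun _ => hOopen V)).isClosed_compl).isOpen_compl
  have hyU : y ∈ U := by
    intro hmem
    obtain ⟨a, haO, hay⟩ := hmem
    exact haO (hKO (by simp [hK, hay]))
  have hUnhds : U ∈ nhds (f x) := hUopen.mem_nhds hyU
  have hpre : f ⁻¹' U ⊆ ⋃ V ∈ 𝒩, O V := by
    intro a ha
    by_contra haO
    exact ha ⟨a, haO, rfl⟩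
  refine ⟨U, hUnhds, (fun V => O V ∩ f ⁻¹' U) '' 𝒩, ?_, ?_, ?_, ?_⟩
  · rintro W ⟨V, hV, rfl⟩
    exact (hOopen V).inter (hUopen.preimage hf)
  · rintro W ⟨V, hV, rfl⟩ W' ⟨V', hV', rfl⟩ hne
    have hVV' : V ≠ V' := fun h => hne (by rw [h])
    exact (hOdisj V hV V' hV' hVV').mono Set.inter_subset_left Set.inter_subset_left
  · rintro W ⟨V, hV, rfl⟩
    have hsub : O V ∩ f ⁻¹' U ⊆ Metric.ball (zc V) (ε/4) := fun a ha => ha.1.1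
    calc Metric.diam (O V ∩ f ⁻¹' U) ≤ Metric.diam (Metric.ball (zc V) (ε/4)) :=
          Metric.diam_mono hsub Metric.isBounded_ball
      _ ≤ 2 * (ε/4) := Metric.diam_ball (by positivity)
      _ < ε := by linarith
  · apply Set.Subset.antisymm
    · intro a ha
      obtain ⟨V, hV, haV⟩ := Set.mem_iUnion₂.mp (hpre ha)
      exact ⟨O V ∩ f ⁻¹' U, ⟨V, hV, rfl⟩, haV, ha⟩
    · rintro a ⟨W, ⟨V, hV, rfl⟩, ha⟩
      exact ha.2
end

section
/- Let f : X → Y be a closed continuous map between metrizable topological spaces, let F ⊆ X be closed, let K be a topological space that is an absolute neighborhood extensor for metrizable spaces, and let h : F → K be a continuous map. Then the set of all y ∈ Y such that h extends to a continuous map from F ∪ f⁻¹(y) into K is open in Y. -/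
universe u v

/-- `K` is an absolute neighborhood extensor for metrizable spaces: every continuous map
into `K` from a closed subset of a metrizable space extends continuously over an open
neighborhood of that subset. -/
def IsANEForMetrizable (K : Type v) [TopologicalSpace K] : Prop :=
  ∀ (Z : Type u) [TopologicalSpace Z] [TopologicalSpace.MetrizableSpace Z],
    ∀ A : Set Z, IsClosed A → ∀ u : A → K, Continuous u →
      ∃ V : Set Z, IsOpen V ∧ A ⊆ V ∧
        ∃ w : V → K, Continuous w ∧ ∀ (a : A) (ha : a.1 ∈ V), w ⟨a.1, ha⟩ = u a

/-- For a closed map `f : X → Y` of metrizable spaces, a closed set `F ⊆ X` and a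
continuous `h : F → K` with `K` an ANE for metrizable spaces, the set of `y ∈ Y` such
that `h` extends continuously over `F ∪ f⁻¹(y)` is open in `Y`. -/
theorem isOpen_extensions_over_fiber
    {X Y : Type u} {K : Type v} [TopologicalSpace X] [TopologicalSpace Y]
    [TopologicalSpace K]
    [TopologicalSpace.MetrizableSpace X] [TopologicalSpace.MetrizableSpace Y]
    (hK : IsANEForMetrizable.{u} K)
    (f : X → Y) (hf : Continuous f) (hfc : IsClosedMap f)
    (F : Set X) (hF : IsClosed F) (h : ↥F → K) (hh : Continuous h) :
    IsOpen {y : Y | ∃ h' : ↥(F ∪ f ⁻¹' {y}) → K, Continuous h' ∧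
      ∀ a : F, h' ⟨a.1, Set.mem_union_left _ a.2⟩ = h a} := by
  rw [isOpen_iff_mem_nhds]
  rintro y₀ ⟨h', hh', hext⟩
  have hA : IsClosed (F ∪ f ⁻¹' {y₀}) := hF.union (IsClosed.preimage hf isClosed_singleton)
  obtain ⟨V, hV, hAV, w, hw, hwa⟩ := hK X (F ∪ f ⁻¹' {y₀}) hA h' hh'
  have hU : IsOpen (f '' Vᶜ)ᶜ := (hfc _ hV.isClosed_compl).isOpen_compl
  have hy₀ : y₀ ∈ (f '' Vᶜ)ᶜ := by
    rintro ⟨x, hxV, rfl⟩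
    exact hxV (hAV (Or.inr rfl))
  refine Filter.mem_of_superset (hU.mem_nhds hy₀) ?_
  intro y hy
  have hsub : F ∪ f ⁻¹' {y} ⊆ V := by
    rintro x (hx | hx)
    · exact hAV (Or.inl hx)
    · by_contra hxV
      exact hy ⟨x, hxV, hx⟩
  refine ⟨fun a => w (Set.inclusion hsub a), hw.comp (continuous_inclusion hsub), ?_⟩
  intro a
  exact (hwa ⟨a.1, Or.inl a.2⟩ (hAV (Or.inl a.2))).trans (hext a)
end

section
/- Let X be a metrizable topological space, let X₀ and A be disjoint closed subsets of X, let n be a natural number, and let g : X → [0,1]ⁿ be a continuous map. Equip the space C(X, [0,1]ⁿ) of continuous maps from X to [0,1]ⁿ and the space C(A, [0,1]ⁿ) of continuous maps from A to [0,1]ⁿ with the uniform convergence topology generated by the Euclidean metric on [0,1]ⁿ. Let H(g) = {h ∈ C(X, [0,1]ⁿ) : h agrees with g on X₀}, viewed as a subspace of C(X, [0,1]ⁿ). Then the restriction map p : H(g) → C(A, [0,1]ⁿ), p(h) = h|A, is surjective and open. -/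
universe u

/-- The unit cube `[0,1]ⁿ` in Euclidean space. -/
def unitCube (n : ℕ) : Set (EuclideanSpace ℝ (Fin n)) :=
  {x | ∀ i, x i ∈ Set.Icc (0 : ℝ) 1}

/-!
Given `h ∈ H(g)` and `f : A → [0,1]ⁿ`, extend `f - h|A` by Tietze to `Δ : X → ℝⁿ` of the same
sup norm, damp it by an Urysohn function that is `0` on `X₀` and `1` on `A`, and project
`h + uΔ` back onto the cube by the coordinatewise clamp, a 1-Lipschitz retraction. The result
lies in `H(g)`, restricts to `f` on `A`, and is within `dist f (h|A)` of `h`; this gives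
surjectivity and openness at once.
-/

open BoundedContinuousFunction Metric Set
open scoped NNReal

theorem isOpenMap_of_exists_dist_le {α β : Type*} [PseudoMetricSpace α] [PseudoMetricSpace β]
    {p : α → β} {C : ℝ≥0} (hp : ∀ a b, ∃ a', p a' = b ∧ dist a' a ≤ C * dist b (p a)) :
    IsOpenMap p := by
  intro U hU
  rw [Metric.isOpen_iff]
  rintro _ ⟨a, ha, rfl⟩
  obtain ⟨ε, hε, hball⟩ := Metric.isOpen_iff.1 hU a ha
  refine ⟨ε / (C + 1), by positivity, fun b hb => ?_⟩
  obtain ⟨a', rfl, ha'⟩ := hp a b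
  refine ⟨a', hball ?_, rfl⟩
  rw [mem_ball] at hb ⊢
  calc dist a' a ≤ C * dist (p a') (p a) := ha'
    _ ≤ C * (ε / (C + 1)) := by gcongr
    _ < ε := by
      rw [mul_div_assoc', div_lt_iff₀ (by positivity)]
      nlinarith

theorem BoundedContinuousFunction.exists_eqOn_domRestrict_eq_dist_le
    {E : Type*} [NormedAddCommGroup E] [NormedSpace ℝ E] [FiniteDimensional ℝ E] {K : Set E}
    (r : E → K) (hr : LipschitzWith 1 r) (hrK : ∀ y : K, r y = y)
    {X : Type*} [TopologicalSpace X] [NormalSpace X] {X₀ A : Set X}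
    (hX₀ : IsClosed X₀) (hA : IsClosed A) (hdisj : Disjoint X₀ A)
    (h : X →ᵇ K) (f : A →ᵇ K) :
    ∃ h' : X →ᵇ K, EqOn h' h X₀ ∧ h'.domRestrict A = f ∧
      dist h' h ≤ dist f (h.domRestrict A) := by
  set D := dist f (h.domRestrict A)
  let hE : X →ᵇ E := h.comp Subtype.val (LipschitzWith.subtype_val K)
  let δ : A →ᵇ E := f.comp Subtype.val (LipschitzWith.subtype_val K) - hE.domRestrict A
  have hδ : ‖δ‖ ≤ D := (norm_le dist_nonneg).2 fun a =>
    (dist_eq_norm (f a : E) (h a)).ge.trans (dist_coe_le_dist (g := h.domRestrict A) a)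
  obtain ⟨Δ, hΔ, hΔA⟩ := exists_norm_eq_domRestrict_eq hA ℝ δ
  obtain ⟨u, hu₀, hu₁, hu⟩ := exists_bounded_zero_one_of_closed hX₀ hA hdisj
  have hsmul (x : X) : (u • Δ) x = u x • Δ x := rfl
  refine ⟨(hE + u • Δ).comp r hr, fun x hx => ?_, ?_, (dist_le dist_nonneg).2 fun x => ?_⟩
  · simp [hE, hsmul, hu₀ hx, hrK]
  · ext1 a
    have hΔa : Δ a = f a - h a := congr($hΔA a)
    simp [hE, hsmul, hu₁ a.2, hΔa, hrK]
  · simp only [comp_apply, add_apply, hsmul]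
    calc dist (r (h x + u x • Δ x)) (h x) = dist (r (h x + u x • Δ x)) (r (h x)) := by rw [hrK]
      _ ≤ dist (h x + u x • Δ x : E) (h x) := hr.dist_le_mul _ _ |>.trans_eq (one_mul _)
      _ = |u x| * ‖Δ x‖ := by rw [dist_self_add_left, norm_smul, Real.norm_eq_abs]
      _ ≤ 1 * ‖Δ‖ := by
          gcongr
          · exact abs_le.2 ⟨by linarith [(hu x).1], (hu x).2⟩
          · exact Δ.norm_coe_le_norm x
      _ ≤ D := by rw [one_mul, hΔ]; exact hδ

theorem EuclideanSpace.dist_le_of_forall_dist_apply_le {ι : Type*} [Fintype ι]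
    {x y x' y' : EuclideanSpace ℝ ι} (h : ∀ i, dist (x' i) (y' i) ≤ dist (x i) (y i)) :
    dist x' y' ≤ dist x y := by
  rw [EuclideanSpace.dist_eq, EuclideanSpace.dist_eq]
  gcongr with i
  exact h i

theorem isCompact_unitCube (n : ℕ) : IsCompact (unitCube n) := by
  convert (EuclideanSpace.equiv (Fin n) ℝ).toHomeomorph.isCompact_preimage.2
    (isCompact_univ_pi fun _ => isCompact_Icc (a := (0 : ℝ)) (b := 1))
  ext x
  simp only [unitCube, mem_ofPred_eq, mem_preimage, mem_univ_pi]
  rfl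

noncomputable def unitCubeRetraction (n : ℕ) (x : EuclideanSpace ℝ (Fin n)) : unitCube n :=
  ⟨WithLp.toLp 2 fun i => projIcc 0 1 zero_le_one (x i),
    fun i => (projIcc 0 1 zero_le_one (x i)).2⟩

theorem lipschitzWith_one_unitCubeRetraction (n : ℕ) :
    LipschitzWith 1 (unitCubeRetraction n) :=
  LipschitzWith.mk_one fun x y => EuclideanSpace.dist_le_of_forall_dist_apply_le fun i => by
    have := (LipschitzWith.projIcc (zero_le_one' ℝ)).dist_le_mul (x i) (y i)
    rwa [NNReal.coe_one, one_mul] at this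

theorem unitCubeRetraction_coe {n : ℕ} (y : unitCube n) : unitCubeRetraction n y = y := by
  ext i
  exact congrArg Subtype.val (projIcc_of_mem zero_le_one (y.2 i))

/-- Let `X₀` and `A` be disjoint closed subsets of a metrizable space `X` and let
`g : X → [0,1]ⁿ` be continuous. Then the restriction map `p : H(g) → C(A, [0,1]ⁿ)`,
`p(h) = h|A`, defined on `H(g) = {h ∈ C(X, [0,1]ⁿ) : h|X₀ = g|X₀}` (function spaces
carrying the uniform convergence topology of the Euclidean metric on `[0,1]ⁿ`), is
surjective and open. -/
theorem restriction_map_surjective_and_open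
    {X : Type u} [TopologicalSpace X] [TopologicalSpace.MetrizableSpace X]
    (X₀ A : Set X) (hX₀ : IsClosed X₀) (hA : IsClosed A) (hdisj : Disjoint X₀ A)
    (n : ℕ) (g : X → ↥(unitCube n)) (hg : Continuous g) :
    Function.Surjective
      (fun h : {h : BoundedContinuousFunction X ↥(unitCube n) // ∀ x ∈ X₀, h x = g x} =>
        (h.1.compContinuous ⟨Subtype.val, continuous_subtype_val⟩ :
          BoundedContinuousFunction ↥A ↥(unitCube n))) ∧
    IsOpenMap
      (fun h : {h : BoundedContinuousFunction X ↥(unitCube n) // ∀ x ∈ X₀, h x = g x} =>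
        (h.1.compContinuous ⟨Subtype.val, continuous_subtype_val⟩ :
          BoundedContinuousFunction ↥A ↥(unitCube n))) := by
  set p := fun h : {h : X →ᵇ unitCube n // ∀ x ∈ X₀, h x = g x} =>
    (h.1.compContinuous ⟨Subtype.val, continuous_subtype_val⟩ : A →ᵇ unitCube n)
  have hp (h f) : ∃ h', p h' = f ∧ dist h' h ≤ (1 : ℝ≥0) * dist f (p h) := by
    obtain ⟨h', hX₀', hA', hdist⟩ := exists_eqOn_domRestrict_eq_dist_le (unitCubeRetraction n)
      (lipschitzWith_one_unitCubeRetraction n) unitCubeRetraction_coe hX₀ hA hdisj h.1 f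
    exact ⟨⟨h', fun x hx => (hX₀' hx).trans (h.2 x hx)⟩, hA', by rwa [NNReal.coe_one, one_mul]⟩
  let g₀ : {h : X →ᵇ unitCube n // ∀ x ∈ X₀, h x = g x} :=
    ⟨mkOfBound ⟨g, hg⟩ (diam (unitCube n)) fun x y =>
      dist_le_diam_of_mem (isCompact_unitCube n).isBounded (g x).2 (g y).2, fun _ _ => rfl⟩
  exact ⟨fun f => (hp g₀ f).imp fun _ => And.left, isOpenMap_of_exists_dist_le hp⟩
end
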